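/- For all integers n ≥ j ≥ 2 with n ≥ 3, one has j!/2 ≤ (n!/2)^{(j-2)/(n-2)} · (j/n)^{(j-2)/2}. -/
import Mathlib

noncomputable def gf (k : ℕ) : ℝ :=
  Real.log (Nat.factorial k) - Real.log 2 - ((k:ℝ)-2)/2 * Real.log k

noncomputable def Df (k : ℕ) : ℝ :=
  (1/2) * Real.log ((k:ℝ)+1) - ((k:ℝ)-2)/2 * (Real.log ((k:ℝ)+1) - Real.log k)

lemma gf_succ (k : ℕ) : gf (k+1) = gf k + Df k := by
  unfold gf Df
  have hf : (0:ℝ) < (Nat.factorial k : ℝ) := by exact_mod_cast Nat.factorial_pos k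
  have h1 : (Nat.factorial (k+1) : ℝ) = ((k:ℝ)+1) * (Nat.factorial k) := by
    push_cast [Nat.factorial_succ]; ring
  rw [h1, Real.log_mul (by positivity) (ne_of_gt hf)]
  push_cast
  ring

lemma gf_two : gf 2 = 0 := by
  unfold gf
  norm_num [Nat.factorial]

lemma Df_step (k : ℕ) (hk : 2 ≤ k) : Df k ≤ Df (k+1) := by
  have hx : (2:ℝ) ≤ (k:ℝ) := by exact_mod_cast hk
  have hx0 : (0:ℝ) < (k:ℝ) := by linarith
  have hb_le_a : Real.log ((k:ℝ)+2) - Real.log ((k:ℝ)+1) ≤ Real.log ((k:ℝ)+1) - Real.log (k:ℝ) := by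
    have h1 : Real.log (((k:ℝ)+2) * (k:ℝ)) ≤ Real.log (((k:ℝ)+1) * ((k:ℝ)+1)) := by
      apply Real.log_le_log (by positivity)
      nlinarith
    rw [Real.log_mul (by positivity) (by positivity),
        Real.log_mul (by positivity) (by positivity)] at h1
    linarith
  have hb_nonneg : 0 ≤ Real.log ((k:ℝ)+2) - Real.log ((k:ℝ)+1) := by
    have := Real.log_le_log (by positivity : (0:ℝ) < (k:ℝ)+1)
      (by linarith : (k:ℝ)+1 ≤ (k:ℝ)+2)
    linarith
  unfold Df
  push_cast
  have h2 : ((k:ℝ)+1+1) = (k:ℝ)+2 := by ring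
  rw [h2]
  nlinarith [mul_nonneg (by linarith : (0:ℝ) ≤ (k:ℝ)-2)
    (by linarith : (0:ℝ) ≤ (Real.log ((k:ℝ)+1) - Real.log (k:ℝ)) - (Real.log ((k:ℝ)+2) - Real.log ((k:ℝ)+1)))]

lemma Df_mono {k l : ℕ} (hk : 2 ≤ k) (hkl : k ≤ l) : Df k ≤ Df l := by
  induction l, hkl using Nat.le_induction with
  | base => exact le_refl _
  | succ n hn ih => exact le_trans ih (Df_step n (le_trans hk hn))

lemma gf_le (m : ℕ) : gf (m+2) ≤ (m:ℝ) * Df (m+1) := by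
  induction m with
  | zero => simp [gf_two]
  | succ m ih =>
    have h1 : gf (m+3) = gf (m+2) + Df (m+2) := gf_succ (m+2)
    have h2 : (m:ℝ) * Df (m+1) ≤ (m:ℝ) * Df (m+2) := by
      rcases Nat.eq_zero_or_pos m with h | h
      · simp [h]
      · exact mul_le_mul_of_nonneg_left (Df_step (m+1) (by omega)) (by positivity)
    push_cast
    have : gf (m+1+2) = gf (m+2) + Df (m+2) := gf_succ (m+2)
    rw [this]
    push_cast at ih
    linarith

lemma gf_le' (j n : ℕ) (hj : 2 ≤ j) (hjn : j ≤ n) : gf j ≤ ((j:ℝ)-2) * Df n := by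
  obtain ⟨m, rfl⟩ : ∃ m, j = m + 2 := ⟨j - 2, by omega⟩
  have h1 := gf_le m
  have h2 : (m:ℝ) * Df (m+1) ≤ (m:ℝ) * Df n := by
    rcases Nat.eq_zero_or_pos m with h | h
    · simp [h]
    · exact mul_le_mul_of_nonneg_left (Df_mono (by omega) (by omega)) (by positivity)
  push_cast
  have : ((m:ℝ) + 2 - 2) = (m:ℝ) := by ring
  rw [this]
  linarith

lemma key (j n : ℕ) (hj : 2 ≤ j) (hjn : j ≤ n) :
    ((n:ℝ)-2) * gf j ≤ ((j:ℝ)-2) * gf n := by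
  induction n, hjn using Nat.le_induction with
  | base => exact le_refl _
  | succ n hn ih =>
    have h1 := gf_le' j n hj hn
    have h2 : gf (n+1) = gf n + Df n := gf_succ n
    push_cast
    rw [h2]
    linarith

theorem factorial_half_le (n j : ℕ) (hj : 2 ≤ j) (hjn : j ≤ n) (hn : 3 ≤ n) :
    (Nat.factorial j : ℝ) / 2 ≤ ((Nat.factorial n : ℝ) / 2) ^ (((j : ℝ) - 2) / ((n : ℝ) - 2)) *
      ((j : ℝ) / (n : ℝ)) ^ (((j : ℝ) - 2) / 2) := by
  have hjf : (0:ℝ) < (Nat.factorial j : ℝ) := by exact_mod_cast Nat.factorial_pos j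
  have hnf : (0:ℝ) < (Nat.factorial n : ℝ) := by exact_mod_cast Nat.factorial_pos n
  have hj2 : (2:ℝ) ≤ (j:ℝ) := by exact_mod_cast hj
  have hn3 : (3:ℝ) ≤ (n:ℝ) := by exact_mod_cast hn
  have hjn' : (j:ℝ) ≤ (n:ℝ) := by exact_mod_cast hjn
  have hn2 : (0:ℝ) < (n:ℝ) - 2 := by linarith
  have hL : (0:ℝ) < (Nat.factorial j : ℝ) / 2 := by positivity
  have hB1 : (0:ℝ) < (Nat.factorial n : ℝ) / 2 := by positivity
  have hB2 : (0:ℝ) < (j:ℝ) / (n:ℝ) := by positivity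
  have hR : (0:ℝ) < ((Nat.factorial n : ℝ) / 2) ^ (((j : ℝ) - 2) / ((n : ℝ) - 2)) *
      ((j : ℝ) / (n : ℝ)) ^ (((j : ℝ) - 2) / 2) := by positivity
  rw [← Real.log_le_log_iff hL hR]
  rw [Real.log_mul (ne_of_gt (Real.rpow_pos_of_pos hB1 _)) (ne_of_gt (Real.rpow_pos_of_pos hB2 _)),
    Real.log_rpow hB1, Real.log_rpow hB2, Real.log_div (ne_of_gt hjf) (by norm_num),
    Real.log_div (ne_of_gt hnf) (by norm_num), Real.log_div (by positivity) (by positivity)]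
  have hkey := key j n hj hjn
  unfold gf at hkey
  rw [div_mul_eq_mul_div, div_mul_eq_mul_div, ← sub_le_iff_le_add, le_div_iff₀ hn2] at *
  -- goal now polynomial-linear in logs; derive from hkey

  nlinarith [hkey]
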